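/- Let {|a_i⟩}_{i=1}^N and {|b_j⟩}_{j=1}^N be two orthonormal bases of ℂ^N with overlap c = max_{i,j} |⟨b_j|a_i⟩|, and let ρ be a density operator on ℂ^N. Then for any two entropic functional pairs (h_A,φ_A) and (h_B,φ_B), H_{(h_A,φ_A)}(p(A,ρ)) + H_{(h_B,φ_B)}(p(B,ρ)) ≥ min_{θ ∈ [0, γ]} ( D_{(h_A,φ_A)}(θ) + D_{(h_B,φ_B)}(γ − θ) ), where γ = arccos c. -/

import Mathlib

open scoped BigOperators ComplexOrder

noncomputable section

/-- An entropic functional pair `(h, φ)` in the sense of Salicrú. -/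
structure EntropicPair where
  phi : ℝ → ℝ
  h : ℝ → ℝ
  phi_cont : ContinuousOn phi (Set.Icc 0 1)
  h_cont : Continuous h
  phi_zero : phi 0 = 0
  norm_zero : h (phi 1) = 0
  admissible : (StrictConcaveOn ℝ (Set.Icc (0:ℝ) 1) phi ∧ StrictMono h) ∨
               (StrictConvexOn ℝ (Set.Icc (0:ℝ) 1) phi ∧ StrictAnti h)

/-- The Salicrú `(h,φ)`-entropy of a probability vector. -/
noncomputable def EntropicPair.H (e : EntropicPair) {ι : Type*} [Fintype ι] (p : ι → ℝ) : ℝ :=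
  e.h (∑ k, e.phi (p k))

/-- The minimal `(h,φ)`-entropy among probability vectors with maximal component `P`. -/
noncomputable def EntropicPair.Hmin (e : EntropicPair) (P : ℝ) : ℝ :=
  e.h ((⌊1 / P⌋₊ : ℝ) * e.phi P + e.phi (1 - (⌊1 / P⌋₊ : ℝ) * P))

/-- `D_{(h,φ)}(θ) = h(⌊1/cos²θ⌋ φ(cos²θ) + φ(1 − ⌊1/cos²θ⌋ cos²θ))`. -/
noncomputable def EntropicPair.D (e : EntropicPair) (θ : ℝ) : ℝ :=
  e.Hmin (Real.cos θ ^ 2)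

/-- A density operator: positive semidefinite with unit trace. -/
def IsDensityOp {N : ℕ} (ρ : Matrix (Fin N) (Fin N) ℂ) : Prop :=
  ρ.PosSemidef ∧ ρ.trace = 1

/-- The overlap `c = max_{i,j} |⟨b_j|a_i⟩|` between two orthonormal bases. -/
noncomputable def basisOverlap {N : ℕ}
    (a b : OrthonormalBasis (Fin N) ℂ (EuclideanSpace ℂ (Fin N))) : ℝ :=
  ⨆ i, ⨆ j, ‖(inner ℂ (b j) (a i) : ℂ)‖

/-- Outcome probabilities `p_i(A,ρ) = ⟨a_i|ρ|a_i⟩` for the nondegenerate observable with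
eigenbasis `a`. -/
noncomputable def basisProb {N : ℕ}
    (a : OrthonormalBasis (Fin N) ℂ (EuclideanSpace ℂ (Fin N)))
    (ρ : Matrix (Fin N) (Fin N) ℂ) : Fin N → ℝ :=
  fun i => ((inner ℂ (a i) ((Matrix.toEuclideanCLM (𝕜 := ℂ) ρ) (a i)) : ℂ)).re

/-!
Let `P_A = p_I(A,ρ)` and `P_B = p_J(B,ρ)` be the largest outcome probabilities and
`θ_A = arccos √P_A`, `θ_B = arccos √P_B`. By Schur concavity of `∑ φ(p_k)`, among probability
vectors with entries at most `P` the sum is extremal at the most concentrated one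
`(P, …, P, 1 - ⌊1/P⌋ P)`, so `H_A ≥ D_A(θ_A)` and `H_B ≥ D_B(θ_B)`.
Writing `ρ = ∑_k |u_k⟩⟨u_k|`, the map `x ↦ (⟨u_k|x⟩)_k` turns the Landau–Pollak argument into a
triangle inequality: `γ ≤ arccos |⟨a_I|b_J⟩| ≤ θ_A + θ_B`. As `D` is nondecreasing on
`[0, π/2)`, the angle `θ = min θ_A γ` then bounds the infimum.
-/

open Set
open scoped InnerProductSpace

lemma ConcaveOn.add_le_add_of_mem_Icc {s : Set ℝ} {φ : ℝ → ℝ} (hφ : ConcaveOn ℝ s φ) {a b x y : ℝ}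
    (ha : a ∈ s) (hb : b ∈ s) (hx : x ∈ Icc b a) (hxy : x + y = a + b) :
    φ a + φ b ≤ φ x + φ y := by
  rcases (hx.1.trans hx.2).eq_or_lt with hab | hab
  · obtain rfl : x = a := le_antisymm hx.2 (hab ▸ hx.1)
    obtain rfl : y = b := by linarith
    rfl
  set t := (x - b) / (a - b)
  have ht : t * (a - b) = x - b := div_mul_cancel₀ _ (sub_pos.2 hab).ne'
  have ht0 : 0 ≤ t := div_nonneg (sub_nonneg.2 hx.1) (sub_pos.2 hab).le
  have ht1 : 0 ≤ 1 - t := sub_nonneg.2 ((div_le_one (sub_pos.2 hab)).2 (by linarith [hx.2]))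
  have h₁ := hφ.2 ha hb ht0 ht1 (by ring)
  have h₂ := hφ.2 ha hb ht1 ht0 (by ring)
  simp only [smul_eq_mul] at h₁ h₂
  rw [show t * a + (1 - t) * b = x by linarith] at h₁
  rw [show (1 - t) * a + t * b = y by linarith] at h₂
  linarith

/-- `⌊S/P⌋ φ(P) + φ(S - ⌊S/P⌋ P)`, the value of `∑ φ(pᵢ)` at the most concentrated vector of
total mass `S` whose entries are at most `P`. -/
def floorSum (φ : ℝ → ℝ) (P S : ℝ) : ℝ :=
  ⌊S / P⌋₊ * φ P + φ (S - ⌊S / P⌋₊ * P)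

section floorSum

variable {φ : ℝ → ℝ} {P : ℝ}

lemma floorSum_add_le (hφ : ConcaveOn ℝ (Icc 0 1) φ) (h0 : φ 0 = 0) (hP : 0 < P) (hP1 : P ≤ 1)
    {x S : ℝ} (hx : x ∈ Icc 0 P) (hS : 0 ≤ S) (hxS : x + S ≤ 1) :
    floorSum φ P (x + S) ≤ φ x + floorSum φ P S := by
  obtain ⟨hx0, hxP⟩ := hx
  set n := ⌊S / P⌋₊
  set r := S - n * P
  have hnP : n * P ≤ S := (le_div_iff₀ hP).1 (Nat.floor_le (div_nonneg hS hP.le))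
  have hrP : r < P := by
    have := (div_lt_iff₀ hP).1 (Nat.lt_floor_add_one (S / P)); linarith
  have hr0 : 0 ≤ r := by linarith
  have hxr : x + r ≤ 1 := by nlinarith [(Nat.cast_nonneg n : (0 : ℝ) ≤ n)]
  rcases lt_or_ge (x + r) P with hlt | hge
  · have hfloor : ⌊(x + S) / P⌋₊ = n := by
      rw [Nat.floor_eq_iff (div_nonneg (by linarith) hP.le), le_div_iff₀ hP, div_lt_iff₀ hP]
      constructor <;> linarith
    have key := hφ.add_le_add_of_mem_Icc ⟨by linarith, hxr⟩ ⟨le_rfl, zero_le_one⟩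
      ⟨by linarith, by linarith⟩ (by ring : x + r = (x + r) + 0)
    rw [floorSum, floorSum, hfloor, show x + S - n * P = x + r by ring]
    linarith
  · have hfloor : ⌊(x + S) / P⌋₊ = n + 1 := by
      rw [Nat.floor_eq_iff (div_nonneg (by linarith) hP.le), le_div_iff₀ hP, div_lt_iff₀ hP]
      push_cast
      constructor <;> linarith
    have key := hφ.add_le_add_of_mem_Icc ⟨hP.le, hP1⟩ ⟨by linarith, by linarith⟩
      ⟨by linarith, hxP⟩ (by ring : x + r = P + (x + r - P))
    rw [floorSum, floorSum, hfloor, show x + S - ((n + 1 : ℕ) : ℝ) * P = x + r - P by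
      push_cast; ring]
    push_cast
    linarith

lemma floorSum_le_sum (hφ : ConcaveOn ℝ (Icc 0 1) φ) (h0 : φ 0 = 0) (hP : 0 < P) (hP1 : P ≤ 1)
    {ι : Type*} (s : Finset ι) {p : ι → ℝ} (hp : ∀ i ∈ s, p i ∈ Icc 0 P)
    (hs : ∑ i ∈ s, p i ≤ 1) :
    floorSum φ P (∑ i ∈ s, p i) ≤ ∑ i ∈ s, φ (p i) := by
  classical
  induction s using Finset.induction_on with
  | empty => simp [floorSum, h0]
  | insert j s hj ih =>
    simp only [Finset.mem_insert, forall_eq_or_imp] at hp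
    rw [Finset.sum_insert hj] at hs ⊢
    rw [Finset.sum_insert hj]
    have hs0 : 0 ≤ ∑ i ∈ s, p i := Finset.sum_nonneg fun i hi => (hp.2 i hi).1
    calc floorSum φ P (p j + ∑ i ∈ s, p i) ≤ φ (p j) + floorSum φ P (∑ i ∈ s, p i) :=
          floorSum_add_le hφ h0 hP hP1 hp.1 hs0 hs
      _ ≤ φ (p j) + ∑ i ∈ s, φ (p i) := by
          gcongr; exact ih hp.2 (by linarith [hp.1.1])

end floorSum

lemma mem_Ioc_of_forall_le_of_sum_eq_one {ι : Type*} [Fintype ι] {p : ι → ℝ} {i : ι}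
    (hp : ∀ j, 0 ≤ p j) (hsum : ∑ j, p j = 1) (hmax : ∀ j, p j ≤ p i) : p i ∈ Ioc 0 1 := by
  refine ⟨?_, hsum ▸ Finset.single_le_sum (fun j _ => hp j) (Finset.mem_univ i)⟩
  by_contra! h
  have := Finset.sum_nonpos fun j (_ : j ∈ Finset.univ) => (hmax j).trans h
  linarith

lemma arccos_sqrt_mem_Ico {P : ℝ} (hP : P ∈ Ioc 0 1) : Real.arccos √P ∈ Ico 0 (Real.pi / 2) :=
  ⟨Real.arccos_nonneg _, Real.arccos_lt_pi_div_two.2 (Real.sqrt_pos.2 hP.1)⟩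

namespace EntropicPair

variable (e : EntropicPair)

lemma Hmin_eq (P : ℝ) : e.Hmin P = e.h (floorSum e.phi P 1) := rfl

lemma Hmin_le_H {ι : Type*} [Fintype ι] {p : ι → ℝ} {P : ℝ} (hP : 0 < P) (hP1 : P ≤ 1)
    (hp : ∀ i, p i ∈ Icc 0 P) (hsum : ∑ i, p i = 1) : e.Hmin P ≤ e.H p := by
  rw [Hmin_eq, H, ← hsum]
  rcases e.admissible with ⟨hφ, hh⟩ | ⟨hφ, hh⟩
  · exact hh.monotone <|
      floorSum_le_sum hφ.concaveOn e.phi_zero hP hP1 _ (fun i _ => hp i) hsum.le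
  · refine hh.antitone ?_
    have := floorSum_le_sum (φ := fun x => -e.phi x) hφ.neg.concaveOn (by simp [e.phi_zero])
      hP hP1 Finset.univ (fun i _ => hp i) hsum.le
    simp only [floorSum, Finset.sum_neg_distrib, mul_neg] at this ⊢
    linarith

lemma Hmin_antitoneOn : AntitoneOn e.Hmin (Ioc 0 1) := by
  intro P hP Q hQ hPQ
  set n := ⌊1 / P⌋₊
  have hnP : n * P ≤ 1 := (le_div_iff₀ hP.1).1 (Nat.floor_le (one_div_nonneg.2 hP.1.le))
  have hrP : 1 - n * P < P := by
    have := (div_lt_iff₀ hP.1).1 (Nat.lt_floor_add_one (1 / P)); linarith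
  -- `Hmin P` is the entropy of `(P, …, P, 1 - nP)`, whose entries are at most `Q`.
  calc e.Hmin Q ≤ e.H (Fin.snoc (fun _ => P) (1 - n * P) : Fin (n + 1) → ℝ) := by
        refine e.Hmin_le_H hQ.1 hQ.2 (fun i => ?_) (by simp [Fin.sum_univ_castSucc])
        cases i using Fin.lastCases with
        | last => rw [Fin.snoc_last]; exact ⟨by linarith, by linarith⟩
        | cast i => rw [Fin.snoc_castSucc]; exact ⟨hP.1.le, hPQ⟩
    _ = e.Hmin P := by simp [H, Hmin, Fin.sum_univ_castSucc, n, mul_comm]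

lemma Hmin_one : e.Hmin 1 = 0 := by simp [Hmin, e.phi_zero, e.norm_zero]

lemma Hmin_nonneg {P : ℝ} (hP : P ∈ Icc 0 1) : 0 ≤ e.Hmin P := by
  rcases hP.1.eq_or_lt with rfl | hP0
  · simp [Hmin, e.phi_zero, e.norm_zero]
  · exact e.Hmin_one ▸ e.Hmin_antitoneOn ⟨hP0, hP.2⟩ ⟨zero_lt_one, le_rfl⟩ hP.2

lemma D_nonneg (θ : ℝ) : 0 ≤ e.D θ :=
  e.Hmin_nonneg ⟨sq_nonneg _, by rw [sq_le_one_iff_abs_le_one]; exact Real.abs_cos_le_one θ⟩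

lemma D_monotoneOn : MonotoneOn e.D (Ico 0 (Real.pi / 2)) := by
  intro θ hθ θ' hθ' hle
  have hcos' : 0 < Real.cos θ' := Real.cos_pos_of_mem_Ioo ⟨by linarith [hθ'.1, Real.pi_pos], hθ'.2⟩
  have hcos : Real.cos θ' ≤ Real.cos θ :=
    Real.cos_le_cos_of_nonneg_of_le_pi hθ.1 (by linarith [hθ'.2, Real.pi_pos]) hle
  exact e.Hmin_antitoneOn ⟨pow_pos hcos' 2, by nlinarith [Real.cos_le_one θ']⟩
    ⟨pow_pos (hcos'.trans_le hcos) 2, by nlinarith [Real.cos_le_one θ]⟩ (by gcongr)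

lemma D_arccos_sqrt {P : ℝ} (hP : P ∈ Icc 0 1) : e.D (Real.arccos √P) = e.Hmin P := by
  rw [D, Real.cos_arccos (by linarith [Real.sqrt_nonneg P]) (Real.sqrt_le_one.2 hP.2),
    Real.sq_sqrt hP.1]

lemma D_arccos_sqrt_le_H {ι : Type*} [Fintype ι] {p : ι → ℝ} {i : ι} (hp : ∀ j, 0 ≤ p j)
    (hsum : ∑ j, p j = 1) (hmax : ∀ j, p j ≤ p i) :
    e.D (Real.arccos √(p i)) ≤ e.H p := by
  have hi := mem_Ioc_of_forall_le_of_sum_eq_one hp hsum hmax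
  rw [e.D_arccos_sqrt (Ioc_subset_Icc_self hi)]
  exact e.Hmin_le_H hi.1 hi.2 (fun j => ⟨hp j, hmax j⟩) hsum

lemma sInf_image_D_add_D_le (eA eB : EntropicPair) {γ θA θB : ℝ} (hγ : 0 ≤ γ)
    (hA : θA ∈ Ico 0 (Real.pi / 2)) (hB : θB ∈ Ico 0 (Real.pi / 2)) (hsum : γ ≤ θA + θB) :
    sInf ((fun θ => eA.D θ + eB.D (γ - θ)) '' Icc 0 γ) ≤ eA.D θA + eB.D θB := by
  have hbdd : BddBelow ((fun θ => eA.D θ + eB.D (γ - θ)) '' Icc 0 γ) :=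
    ⟨0, forall_mem_image.2 fun θ _ => add_nonneg (eA.D_nonneg θ) (eB.D_nonneg _)⟩
  have hθ : min θA γ ∈ Icc 0 γ := ⟨le_min hA.1 hγ, min_le_right _ _⟩
  have hrest : γ - min θA γ ∈ Icc 0 θB :=
    ⟨sub_nonneg.2 (min_le_right _ _), sub_le_comm.1 (le_min (by linarith) (by linarith [hB.1]))⟩
  refine (csInf_le hbdd (mem_image_of_mem _ hθ)).trans (add_le_add ?_ ?_)
  · exact eA.D_monotoneOn ⟨hθ.1, (min_le_left _ _).trans_lt hA.2⟩ hA (min_le_left _ _)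
  · exact eB.D_monotoneOn ⟨hrest.1, hrest.2.trans_lt hB.2⟩ hB hrest.2

end EntropicPair

open Real in
lemma arccos_le_arccos_sqrt_add_arccos_sqrt {m p q : ℝ} (hm : m ∈ Icc (-1) 1) (hp : p ∈ Icc 0 1)
    (hq : q ≤ 1) (h : √q ≤ m * √p + √(1 - m ^ 2) * √(1 - p)) :
    arccos m ≤ arccos √p + arccos √q := by
  have hβ : arccos √q ∈ Icc 0 π := ⟨arccos_nonneg _, arccos_le_pi _⟩
  rcases lt_or_ge (arccos m - arccos √p) 0 with hneg | hnonneg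
  · linarith [hβ.1]
  have hcos : cos (arccos √q) ≤ cos (arccos m - arccos √p) := by
    rw [cos_sub, cos_arccos hm.1 hm.2, sin_arccos, sin_arccos, sq_sqrt hp.1,
      cos_arccos (by linarith [sqrt_nonneg p]) (sqrt_le_one.2 hp.2),
      cos_arccos (by linarith [sqrt_nonneg q]) (sqrt_le_one.2 hq)]
    exact h
  have := (strictAntiOn_cos.le_iff_ge hβ
    ⟨hnonneg, by linarith [arccos_le_pi m, arccos_nonneg √p]⟩).1 hcos
  linarith

section Ensemble

variable {𝕜 E ι : Type*} [RCLike 𝕜] [NormedAddCommGroup E] [InnerProductSpace 𝕜 E] [Fintype ι]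

variable (𝕜) in
/-- `⟨x|ρ|x⟩` for the (unnormalized) ensemble decomposition `ρ = ∑ₖ |uₖ⟩⟨uₖ|`. -/
def ensembleProb (u : ι → E) (x : E) : ℝ := ∑ k, ‖⟪u k, x⟫_𝕜‖ ^ 2

lemma ensembleProb_nonneg (u : ι → E) (x : E) : 0 ≤ ensembleProb 𝕜 u x := by
  unfold ensembleProb; positivity

lemma sum_ensembleProb_orthonormalBasis {ι' : Type*} [Fintype ι'] (u : ι → E)
    (b : OrthonormalBasis ι' 𝕜 E) : ∑ i, ensembleProb 𝕜 u (b i) = ∑ k, ‖u k‖ ^ 2 := by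
  unfold ensembleProb
  rw [Finset.sum_comm]
  exact Finset.sum_congr rfl fun k _ => b.sum_sq_norm_inner_left (u k)

lemma ensembleProb_le (u : ι → E) (x : E) :
    ensembleProb 𝕜 u x ≤ (∑ k, ‖u k‖ ^ 2) * ‖x‖ ^ 2 := by
  rw [ensembleProb, Finset.sum_mul]
  gcongr with k
  rw [← mul_pow]
  gcongr
  exact norm_inner_le_norm _ _

lemma re_inner_sum_rankOne_self (u : ι → E) (x : E) :
    RCLike.re ⟪x, (∑ k, InnerProductSpace.rankOne 𝕜 (u k) (u k)) x⟫_𝕜 = ensembleProb 𝕜 u x := by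
  simp only [FunLike.coe_sum, Finset.sum_apply, InnerProductSpace.rankOne_apply,
    inner_sum, inner_smul_right, map_sum, ensembleProb]
  refine Finset.sum_congr rfl fun k _ => ?_
  rw [← inner_conj_symm x, RCLike.mul_conj]
  norm_cast

variable (𝕜) in
def ensembleAmp (u : ι → E) : E →ₗ[𝕜] EuclideanSpace 𝕜 ι :=
  (WithLp.linearEquiv 2 𝕜 (ι → 𝕜)).symm.toLinearMap ∘ₗ LinearMap.pi fun k => innerₛₗ 𝕜 (u k)

lemma norm_ensembleAmp_sq (u : ι → E) (x : E) :
    ‖ensembleAmp 𝕜 u x‖ ^ 2 = ensembleProb 𝕜 u x := by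
  simp [ensembleAmp, ensembleProb, EuclideanSpace.norm_sq_eq]

lemma norm_sub_inner_smul_sq {e : E} (he : ‖e‖ = 1) (z : E) :
    ‖z - ⟪e, z⟫_𝕜 • e‖ ^ 2 = ‖z‖ ^ 2 - ‖⟪e, z⟫_𝕜‖ ^ 2 := by
  have horth : ⟪⟪e, z⟫_𝕜 • e, z - ⟪e, z⟫_𝕜 • e⟫_𝕜 = 0 := by
    rw [inner_smul_left, inner_sub_right, inner_smul_right, inner_self_eq_norm_sq_to_K, he]
    simp
  have := norm_add_sq_eq_norm_sq_add_norm_sq_of_inner_eq_zero _ _ horth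
  rw [add_sub_cancel, norm_smul, he, mul_one] at this
  linarith

lemma ensembleProb_le_of_inner_eq_zero (u : ι → E) {e y : E} (he : ‖e‖ = 1)
    (hy : ⟪e, y⟫_𝕜 = 0) :
    ensembleProb 𝕜 u y ≤ (∑ k, ‖u k‖ ^ 2 - ensembleProb 𝕜 u e) * ‖y‖ ^ 2 := by
  rw [ensembleProb, ensembleProb, ← Finset.sum_sub_distrib, Finset.sum_mul]
  refine Finset.sum_le_sum fun k _ => ?_
  have hproj : ⟪u k, y⟫_𝕜 = ⟪u k - ⟪e, u k⟫_𝕜 • e, y⟫_𝕜 := by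
    rw [inner_sub_left, inner_smul_left, hy, mul_zero, sub_zero]
  calc ‖⟪u k, y⟫_𝕜‖ ^ 2 ≤ (‖u k - ⟪e, u k⟫_𝕜 • e‖ * ‖y‖) ^ 2 := by
        rw [hproj]; gcongr; exact norm_inner_le_norm _ _
    _ = (‖u k‖ ^ 2 - ‖⟪u k, e⟫_𝕜‖ ^ 2) * ‖y‖ ^ 2 := by
        rw [mul_pow, norm_sub_inner_smul_sq he, norm_inner_symm]

/-- Landau–Pollak inequality for the mixed state `∑ₖ |uₖ⟩⟨uₖ|`: split `y` along `x` and use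
the triangle inequality for the amplitude vectors. -/
lemma sqrt_ensembleProb_le (u : ι → E) (hu : ∑ k, ‖u k‖ ^ 2 = 1) {x y : E} (hx : ‖x‖ = 1)
    (hy : ‖y‖ = 1) :
    √(ensembleProb 𝕜 u y) ≤ ‖⟪x, y⟫_𝕜‖ * √(ensembleProb 𝕜 u x)
      + √(1 - ‖⟪x, y⟫_𝕜‖ ^ 2) * √(1 - ensembleProb 𝕜 u x) := by
  set y' := y - ⟪x, y⟫_𝕜 • x
  have horth : ⟪x, y'⟫_𝕜 = 0 := by
    rw [inner_sub_right, inner_smul_right, inner_self_eq_norm_sq_to_K, hx]; simp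
  have hy' : ‖y'‖ ^ 2 = 1 - ‖⟪x, y⟫_𝕜‖ ^ 2 := by rw [norm_sub_inner_smul_sq hx, hy, one_pow]
  have hA : ensembleAmp 𝕜 u y = ⟪x, y⟫_𝕜 • ensembleAmp 𝕜 u x + ensembleAmp 𝕜 u y' := by
    rw [← map_smul, ← map_add, add_sub_cancel]
  have hsqrt (z : E) : √(ensembleProb 𝕜 u z) = ‖ensembleAmp 𝕜 u z‖ := by
    rw [← norm_ensembleAmp_sq, Real.sqrt_sq (norm_nonneg _)]
  calc √(ensembleProb 𝕜 u y) ≤ ‖⟪x, y⟫_𝕜‖ * √(ensembleProb 𝕜 u x) + √(ensembleProb 𝕜 u y') := by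
        rw [hsqrt, hsqrt, hsqrt, hA, ← norm_smul]; exact norm_add_le _ _
    _ ≤ _ := by
        gcongr
        calc √(ensembleProb 𝕜 u y') ≤ √((1 - ensembleProb 𝕜 u x) * ‖y'‖ ^ 2) := by
              gcongr; rw [← hu]; exact ensembleProb_le_of_inner_eq_zero u hx horth
          _ = _ := by rw [hy', Real.sqrt_mul' _ (by rw [← hy']; positivity), mul_comm]

lemma arccos_norm_inner_le (u : ι → E) (hu : ∑ k, ‖u k‖ ^ 2 = 1) {x y : E} (hx : ‖x‖ = 1)
    (hy : ‖y‖ = 1) :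
    Real.arccos ‖⟪x, y⟫_𝕜‖ ≤
      Real.arccos √(ensembleProb 𝕜 u x) + Real.arccos √(ensembleProb 𝕜 u y) := by
  have hle (z : E) (hz : ‖z‖ = 1) : ensembleProb 𝕜 u z ≤ 1 := by
    simpa [hu, hz] using ensembleProb_le (𝕜 := 𝕜) u z
  have hxy : ‖⟪x, y⟫_𝕜‖ ≤ 1 := by simpa [hx, hy] using norm_inner_le_norm (𝕜 := 𝕜) x y
  exact arccos_le_arccos_sqrt_add_arccos_sqrt ⟨by linarith [norm_nonneg ⟪x, y⟫_𝕜], hxy⟩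
    ⟨ensembleProb_nonneg u x, hle x hx⟩ (hle y hy) (sqrt_ensembleProb_le u hu hx hy)

end Ensemble

lemma sum_basisProb {N : ℕ} (a : OrthonormalBasis (Fin N) ℂ (EuclideanSpace ℂ (Fin N)))
    {ρ : Matrix (Fin N) (Fin N) ℂ} (hρ : IsDensityOp ρ) : ∑ i, basisProb a ρ i = 1 := by
  have htrace : ∑ i, ⟪a i, Matrix.toEuclideanCLM (𝕜 := ℂ) ρ (a i)⟫_ℂ = ρ.trace := by
    refine (LinearMap.trace_eq_sum_inner (Matrix.toEuclideanLin ρ) a).symm.trans ?_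
    rw [LinearMap.trace_eq_sum_inner _ (EuclideanSpace.basisFun (Fin N) ℂ)]
    simp [Matrix.trace, EuclideanSpace.inner_single_left]
  simp only [basisProb, ← Complex.re_sum, htrace, hρ.2, Complex.one_re]

lemma norm_inner_le_basisOverlap {N : ℕ}
    (a b : OrthonormalBasis (Fin N) ℂ (EuclideanSpace ℂ (Fin N))) (i j : Fin N) :
    ‖⟪a i, b j⟫_ℂ‖ ≤ basisOverlap a b := by
  rw [norm_inner_symm, basisOverlap]
  exact (le_ciSup (Finite.bddAbove (finite_range _)) j).trans
    (le_ciSup (f := fun i => ⨆ j, ‖⟪b j, a i⟫_ℂ‖) (Finite.bddAbove (finite_range _)) i)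

lemma IsDensityOp.exists_basisProb_eq_ensembleProb {N : ℕ} {ρ : Matrix (Fin N) (Fin N) ℂ}
    (hρ : IsDensityOp ρ) :
    ∃ (m : ℕ) (u : Fin m → EuclideanSpace ℂ (Fin N)), ∑ k, ‖u k‖ ^ 2 = 1 ∧
      ∀ a i, basisProb a ρ i = ensembleProb ℂ u (a i) := by
  have hpos : (Matrix.toEuclideanCLM (𝕜 := ℂ) ρ).IsPositive := by
    rw [← ContinuousLinearMap.isPositive_toLinearMap_iff,
      Matrix.coe_toEuclideanCLM_eq_toEuclideanLin, Matrix.isPositive_toEuclideanLin_iff]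
    exact hρ.1
  obtain ⟨m, u, hu⟩ := ContinuousLinearMap.isPositive_iff_eq_sum_rankOne.1 hpos
  have hprob a i : basisProb a ρ i = ensembleProb ℂ u (a i) := by
    simp only [basisProb, hu]; exact re_inner_sum_rankOne_self (𝕜 := ℂ) u _
  refine ⟨m, u, ?_, hprob⟩
  rw [← sum_ensembleProb_orthonormalBasis u (EuclideanSpace.basisFun (Fin N) ℂ)]
  simp_rw [← hprob]
  exact sum_basisProb _ hρ

/-- For nondegenerate observables with eigenbases `a`, `b` of overlap `c`,
the entropy sum is bounded below by `min_{θ ∈ [0,γ]} (D_A(θ) + D_B(γ−θ))`, `γ = arccos c`. -/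
theorem entropic_uncertainty_relation_nondegenerate
    {N : ℕ} (hN : 0 < N)
    (a b : OrthonormalBasis (Fin N) ℂ (EuclideanSpace ℂ (Fin N)))
    (ρ : Matrix (Fin N) (Fin N) ℂ) (hρ : IsDensityOp ρ)
    (eA eB : EntropicPair)
    (c γ : ℝ) (hc : c = basisOverlap a b) (hγ : γ = Real.arccos c) :
    eA.H (basisProb a ρ) + eB.H (basisProb b ρ) ≥
      sInf ((fun θ => eA.D θ + eB.D (γ - θ)) '' Set.Icc 0 γ) := by
  obtain ⟨m, u, hu, hprob⟩ := hρ.exists_basisProb_eq_ensembleProb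
  have : Nonempty (Fin N) := Fin.pos_iff_nonempty.1 hN
  obtain ⟨I, hI⟩ := Finite.exists_max (basisProb a ρ)
  obtain ⟨J, hJ⟩ := Finite.exists_max (basisProb b ρ)
  have hp v i : 0 ≤ basisProb v ρ i := hprob v i ▸ ensembleProb_nonneg (𝕜 := ℂ) u _
  have hPA := mem_Ioc_of_forall_le_of_sum_eq_one (hp a) (sum_basisProb a hρ) hI
  have hPB := mem_Ioc_of_forall_le_of_sum_eq_one (hp b) (sum_basisProb b hρ) hJ
  have hγle : γ ≤ Real.arccos √(basisProb a ρ I) + Real.arccos √(basisProb b ρ J) := by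
    calc γ ≤ Real.arccos ‖⟪a I, b J⟫_ℂ‖ :=
          hγ ▸ Real.arccos_le_arccos (hc ▸ norm_inner_le_basisOverlap a b I J)
      _ ≤ _ := by
          rw [hprob, hprob]
          exact arccos_norm_inner_le u hu (a.orthonormal.1 I) (b.orthonormal.1 J)
  calc sInf ((fun θ => eA.D θ + eB.D (γ - θ)) '' Set.Icc 0 γ)
      ≤ eA.D (Real.arccos √(basisProb a ρ I)) + eB.D (Real.arccos √(basisProb b ρ J)) :=
        eA.sInf_image_D_add_D_le eB (hγ ▸ Real.arccos_nonneg c) (arccos_sqrt_mem_Ico hPA)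
          (arccos_sqrt_mem_Ico hPB) hγle
    _ ≤ eA.H (basisProb a ρ) + eB.H (basisProb b ρ) :=
        add_le_add (eA.D_arccos_sqrt_le_H (hp a) (sum_basisProb a hρ) hI)
          (eB.D_arccos_sqrt_le_H (hp b) (sum_basisProb b hρ) hJ)
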